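/- Let G be a group, O(G) its commutative Hopf algebra of functions, and J a Hopf 2-cocycle for O(G). For each g ∈ G (viewed as a character of O(G)), the map f ↦ Σ g(f₁) f₂ is an algebra automorphism of the right-twisted algebra O(G)_J whose multiplication is mⱼ(a ⊗ b) = Σ a₁b₁ J(a₂,b₂). -/

import Mathlib

open TensorProduct

noncomputable section

/-- Convolution product of two `ℂ`-valued functionals on a `ℂ`-coalgebra. -/
def conv {C : Type} [AddCommGroup C] [Module ℂ C] [Coalgebra ℂ C]
    (f g : C →ₗ[ℂ] ℂ) : C →ₗ[ℂ] ℂ :=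
  LinearMap.mul' ℂ ℂ ∘ₗ TensorProduct.map f g ∘ₗ Coalgebra.comul

variable {H : Type} [CommRing H] [HopfAlgebra ℂ H]

/-- `a ⊗ b ⊗ c ↦ Σ J(a₁b₁ ⊗ c) J(a₂ ⊗ b₂)`. -/
def cocycleLHS (J : H ⊗[ℂ] H →ₗ[ℂ] ℂ) : (H ⊗[ℂ] H) ⊗[ℂ] H →ₗ[ℂ] ℂ :=
  conv (J ∘ₗ TensorProduct.map (LinearMap.mul' ℂ H) LinearMap.id)
    (LinearMap.mul' ℂ ℂ ∘ₗ TensorProduct.map J Coalgebra.counit)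

/-- `a ⊗ b ⊗ c ↦ Σ J(a ⊗ b₁c₁) J(b₂ ⊗ c₂)`. -/
def cocycleRHS (J : H ⊗[ℂ] H →ₗ[ℂ] ℂ) : (H ⊗[ℂ] H) ⊗[ℂ] H →ₗ[ℂ] ℂ :=
  conv (J ∘ₗ TensorProduct.map LinearMap.id (LinearMap.mul' ℂ H)
        ∘ₗ (TensorProduct.assoc ℂ H H H).toLinearMap)
    (LinearMap.mul' ℂ ℂ ∘ₗ TensorProduct.map Coalgebra.counit J
        ∘ₗ (TensorProduct.assoc ℂ H H H).toLinearMap)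

/-- A Hopf 2-cocycle for `H`: a convolution-invertible functional on `H ⊗ H` satisfying
`Σ J(a₁b₁, c) J(a₂, b₂) = Σ J(a, b₁c₁) J(b₂, c₂)` and `J(a,1) = ε(a) = J(1,a)`. -/
structure IsHopf2Cocycle (J : H ⊗[ℂ] H →ₗ[ℂ] ℂ) : Prop where
  invertible : ∃ J' : H ⊗[ℂ] H →ₗ[ℂ] ℂ,
    conv J J' = Coalgebra.counit ∧ conv J' J = Coalgebra.counit
  cocycle : cocycleLHS J = cocycleRHS J
  norm_right : ∀ a : H, J (a ⊗ₜ[ℂ] (1 : H)) = Coalgebra.counit a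
  norm_left : ∀ a : H, J ((1 : H) ⊗ₜ[ℂ] a) = Coalgebra.counit a


/-- The right-twisted product `a ⊗ b ↦ Σ a₁b₁ ψ(a₂ ⊗ b₂)` of `O(G)_J`. -/
def twR (ψ : H ⊗[ℂ] H →ₗ[ℂ] ℂ) : H ⊗[ℂ] H →ₗ[ℂ] H :=
  (TensorProduct.rid ℂ H).toLinearMap
    ∘ₗ TensorProduct.map (LinearMap.mul' ℂ H) ψ ∘ₗ Coalgebra.comul

/-- The left winding endomorphism `f ↦ Σ g(f₁) f₂` attached to a character `g`. -/
def winding (g : H →ₐ[ℂ] ℂ) : H →ₗ[ℂ] H :=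
  (TensorProduct.lid ℂ H).toLinearMap
    ∘ₗ TensorProduct.map g.toLinearMap LinearMap.id ∘ₗ Coalgebra.comul


/-! For a functional `φ`, the winding map `W_φ = (φ ⊗ id) ∘ Δ` satisfies `Δ ∘ W_φ = (W_φ ⊗ id) ∘ Δ`
by coassociativity, and consequently `W_φ ∘ W_ψ = W_{ψ * φ}` for the convolution product, with
`W_ε = id`. A character `g` of a Hopf algebra is convolution-invertible (with inverse `g ∘ S`), so
`W_g` is bijective. For a character, `W_g` is moreover a composite of algebra maps, and since the
twisted product `Σ a₁b₁ J(a₂, b₂)` feeds `J` only the right tensor legs, which `W_g` leaves alone,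
`W_g` commutes with it. -/

open Coalgebra WithConv

section Winding

variable {R C : Type*} [CommSemiring R] [AddCommMonoid C] [Module R C] [Coalgebra R C]

def leftWinding (φ : C →ₗ[R] R) : C →ₗ[R] C :=
  (TensorProduct.lid R C).toLinearMap ∘ₗ TensorProduct.map φ LinearMap.id ∘ₗ comul

lemma comul_comp_leftWinding (φ : C →ₗ[R] R) :
    comul ∘ₗ leftWinding φ = (leftWinding φ).rTensor C ∘ₗ comul := by
  set contract : C ⊗[R] C →ₗ[R] C :=
    (TensorProduct.lid R C).toLinearMap ∘ₗ TensorProduct.map φ LinearMap.id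
  have h_comul : comul ∘ₗ contract =
      (TensorProduct.lid R (C ⊗[R] C)).toLinearMap ∘ₗ TensorProduct.map φ LinearMap.id ∘ₗ
        comul.lTensor C :=
    TensorProduct.ext' fun a b => by simp [contract]
  have h_assoc : (TensorProduct.lid R (C ⊗[R] C)).toLinearMap ∘ₗ
      TensorProduct.map φ LinearMap.id ∘ₗ (TensorProduct.assoc R C C C).toLinearMap =
        contract.rTensor C :=
    TensorProduct.ext_threefold fun a b c => by simp [contract, TensorProduct.smul_tmul']
  calc comul ∘ₗ leftWinding φ = (comul ∘ₗ contract) ∘ₗ comul := rfl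
    _ = contract.rTensor C ∘ₗ comul.rTensor C ∘ₗ comul := by
      rw [h_comul, ← h_assoc]
      simp only [LinearMap.comp_assoc, coassoc]
    _ = (leftWinding φ).rTensor C ∘ₗ comul := by
      rw [← LinearMap.comp_assoc, ← LinearMap.rTensor_comp]
      rfl

lemma comp_leftWinding (φ f : C →ₗ[R] R) :
    f ∘ₗ leftWinding φ = (toConv φ * toConv f).ofConv := by
  have h : f ∘ₗ (TensorProduct.lid R C).toLinearMap ∘ₗ TensorProduct.map φ LinearMap.id =
      LinearMap.mul' R R ∘ₗ TensorProduct.map φ f := by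
    ext; simp
  exact congr($h ∘ₗ comul)

lemma leftWinding_one : leftWinding (1 : WithConv (C →ₗ[R] R)).ofConv = LinearMap.id := by
  ext c
  change TensorProduct.lid R C (counit.rTensor C (comul c)) = c
  rw [rTensor_counit_comul, TensorProduct.lid_tmul, one_smul]

lemma leftWinding_comp_leftWinding (φ ψ : C →ₗ[R] R) :
    leftWinding φ ∘ₗ leftWinding ψ = leftWinding (toConv ψ * toConv φ).ofConv := by
  calc leftWinding φ ∘ₗ leftWinding ψ
      = (TensorProduct.lid R C).toLinearMap ∘ₗ TensorProduct.map φ LinearMap.id ∘ₗ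
          (comul ∘ₗ leftWinding ψ) := rfl
    _ = (TensorProduct.lid R C).toLinearMap ∘ₗ
          TensorProduct.map (φ ∘ₗ leftWinding ψ) LinearMap.id ∘ₗ comul := by
      rw [comul_comp_leftWinding, ← LinearMap.map_comp_rTensor]
      rfl
    _ = leftWinding (toConv ψ * toConv φ).ofConv := by
      rw [comp_leftWinding]
      rfl

lemma bijective_leftWinding_of_isUnit {φ : C →ₗ[R] R} (hφ : IsUnit (toConv φ)) :
    Function.Bijective (leftWinding φ) := by
  obtain ⟨ψ, hφψ, hψφ⟩ := isUnit_iff_exists.1 hφ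
  refine Function.bijective_iff_has_inverse.2 ⟨leftWinding ψ.ofConv, fun c => ?_, fun c => ?_⟩
  · rw [← LinearMap.comp_apply, leftWinding_comp_leftWinding, toConv_ofConv, hφψ,
      leftWinding_one, LinearMap.id_apply]
  · rw [← LinearMap.comp_apply, leftWinding_comp_leftWinding, toConv_ofConv, hψφ,
      leftWinding_one, LinearMap.id_apply]

end Winding

lemma comul_comp_map_of_comul_comp {R C D : Type*} [CommSemiring R]
    [AddCommMonoid C] [Module R C] [Coalgebra R C] [AddCommMonoid D] [Module R D] [Coalgebra R D]
    (f : C →ₗ[R] C) (g : D →ₗ[R] D)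
    (hf : comul ∘ₗ f = f.rTensor C ∘ₗ comul) (hg : comul ∘ₗ g = g.rTensor D ∘ₗ comul) :
    comul ∘ₗ map f g = (map f g).rTensor (C ⊗[R] D) ∘ₗ comul := by
  calc comul ∘ₗ map f g
      = (tensorTensorTensorComm R C C D D).toLinearMap ∘ₗ map (comul ∘ₗ f) (comul ∘ₗ g) := by
        rw [comul_def, AlgebraTensorModule.map_eq, AlgebraTensorModule.tensorTensorTensorComm_eq,
          LinearMap.comp_assoc, ← map_comp]
    _ = ((tensorTensorTensorComm R C C D D).toLinearMap ∘ₗ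
          map (map f LinearMap.id) (map g LinearMap.id)) ∘ₗ map comul comul := by
        rw [hf, hg, map_comp]
        rfl
    _ = (map f g).rTensor (C ⊗[R] D) ∘ₗ comul := by
        rw [tensorTensorTensorComm_comp_map, map_id]
        rfl

section Characters

variable {R A : Type*} [CommSemiring R] [Semiring A]

lemma isUnit_toConv_algHom [HopfAlgebra R A] (g : A →ₐ[R] R) : IsUnit (toConv g.toLinearMap) := by
  refine isUnit_iff_exists.2 ⟨toConv (g.toLinearMap ∘ₗ HopfAlgebra.antipode R), ?_, ?_⟩
  · refine ofConv_injective ?_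
    rw [← LinearMap.algHom_comp_convOne g, ← LinearMap.id_mul_antipode,
      LinearMap.algHom_comp_convMul_distrib]
    rfl
  · refine ofConv_injective ?_
    rw [← LinearMap.algHom_comp_convOne g, ← LinearMap.antipode_mul_id,
      LinearMap.algHom_comp_convMul_distrib]
    rfl

def leftWindingAlgHom [Bialgebra R A] (g : A →ₐ[R] R) : A →ₐ[R] A :=
  (Algebra.TensorProduct.lid R A).toAlgHom.comp
    ((Algebra.TensorProduct.map g (AlgHom.id R A)).comp (Bialgebra.comulAlgHom R A))

lemma toLinearMap_leftWindingAlgHom [Bialgebra R A] (g : A →ₐ[R] R) :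
    (leftWindingAlgHom g).toLinearMap = leftWinding g.toLinearMap :=
  LinearMap.ext fun _ => rfl

end Characters

lemma comp_twR_of_comul_comp (f : H →ₐ[ℂ] H)
    (hf : comul ∘ₗ f.toLinearMap = f.toLinearMap.rTensor H ∘ₗ comul) (ψ : H ⊗[ℂ] H →ₗ[ℂ] ℂ) :
    f.toLinearMap ∘ₗ twR ψ = twR ψ ∘ₗ map f.toLinearMap f.toLinearMap := by
  have h_rid : f.toLinearMap ∘ₗ (TensorProduct.rid ℂ H).toLinearMap ∘ₗ
      map (LinearMap.mul' ℂ H) ψ =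
        (TensorProduct.rid ℂ H).toLinearMap ∘ₗ map (f.toLinearMap ∘ₗ LinearMap.mul' ℂ H) ψ :=
    TensorProduct.ext' fun x y => by simp
  calc f.toLinearMap ∘ₗ twR ψ
      = ((TensorProduct.rid ℂ H).toLinearMap ∘ₗ
          map (LinearMap.mul' ℂ H ∘ₗ map f.toLinearMap f.toLinearMap) ψ) ∘ₗ comul := by
        rw [← AlgHom.comp_mul', ← h_rid]
        rfl
    _ = ((TensorProduct.rid ℂ H).toLinearMap ∘ₗ map (LinearMap.mul' ℂ H) ψ) ∘ₗ
          (map f.toLinearMap f.toLinearMap).rTensor (H ⊗[ℂ] H) ∘ₗ comul := by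
        rw [← LinearMap.map_comp_rTensor]
        rfl
    _ = twR ψ ∘ₗ map f.toLinearMap f.toLinearMap := by
        rw [← comul_comp_map_of_comul_comp _ _ hf hf]
        rfl

theorem winding_automorphism_of_right_twist (g : H →ₐ[ℂ] ℂ)
    (J : H ⊗[ℂ] H →ₗ[ℂ] ℂ) :
    Function.Bijective (winding g)
    ∧ winding g (1 : H) = 1
    ∧ ∀ a b : H, winding g (twR J (a ⊗ₜ[ℂ] b))
        = twR J (winding g a ⊗ₜ[ℂ] winding g b) := by
  have h_alg : winding g = (leftWindingAlgHom g).toLinearMap :=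
    (toLinearMap_leftWindingAlgHom g).symm
  have h_colinear := comul_comp_leftWinding g.toLinearMap
  rw [← toLinearMap_leftWindingAlgHom] at h_colinear
  refine ⟨bijective_leftWinding_of_isUnit (isUnit_toConv_algHom g), ?_, fun a b => ?_⟩
  · rw [h_alg, AlgHom.toLinearMap_apply, map_one]
  · rw [h_alg]
    exact congr($(comp_twR_of_comul_comp _ h_colinear J) (a ⊗ₜ b))

end
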